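/- arXiv:1908.07489 — 2 statements merged into one kernel-verified Lean document; each statement's English description precedes it below -/
import Mathlib

section
/- For q ∈ (0, 1/2] and q₁ ∈ [1/2, 1) with q ≤ 1 - q₁, the inequality f(q) ≤ (f(1-q₁)/(1-q₁)) · q holds, where f(q) = q(1-(1-q)²)/((1-q)² + q). -/
/-!
Writing `f x = x * s x` with `s x = x (2 - x) / ((1 - x)² + x)`, the chord bound says
`s q ≤ s (1 - q₁)`. The slope `s` is increasing on `[0, √3 - 1] ⊇ [0, 1/2]`, since
`s a - s q = (a - q)(3 - (1 + a)(1 + q)) / (positive)`.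
-/

open Real Set

noncomputable def chordSlope (x : ℝ) : ℝ := x * (2 - x) / ((1 - x) ^ 2 + x)

lemma one_sub_sq_add_pos (x : ℝ) : 0 < (1 - x) ^ 2 + x := by
  nlinarith [sq_nonneg (x - 1 / 2)]

lemma mul_chordSlope (x : ℝ) :
    x * chordSlope x = x * (1 - (1 - x) ^ 2) / ((1 - x) ^ 2 + x) := by
  rw [chordSlope, mul_div_assoc']
  ring

lemma chordSlope_sub_chordSlope (a q : ℝ) :
    chordSlope a - chordSlope q =
      (a - q) * (3 - (1 + a) * (1 + q)) / (((1 - a) ^ 2 + a) * ((1 - q) ^ 2 + q)) := by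
  rw [chordSlope, chordSlope, div_sub_div _ _ (one_sub_sq_add_pos a).ne'
    (one_sub_sq_add_pos q).ne']
  ring

lemma chordSlope_monotoneOn : MonotoneOn chordSlope (Icc 0 (√3 - 1)) := by
  rintro q ⟨hq0, hq⟩ a ⟨ha0, ha⟩ hqa
  have hprod : (1 + a) * (1 + q) ≤ 3 := calc
    (1 + a) * (1 + q) ≤ √3 * √3 := by gcongr <;> linarith
    _ = 3 := mul_self_sqrt (by norm_num)
  rw [← sub_nonneg, chordSlope_sub_chordSlope]
  exact div_nonneg (mul_nonneg (sub_nonneg.2 hqa) (sub_nonneg.2 hprod))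
    (mul_pos (one_sub_sq_add_pos a) (one_sub_sq_add_pos q)).le

lemma half_le_sqrt_three_sub_one : (1 / 2 : ℝ) ≤ √3 - 1 := by
  have : (3 / 2 : ℝ) ≤ √3 := le_sqrt_of_sq_le (by norm_num)
  linarith

theorem f_chord_bound (f : ℝ → ℝ)
    (hf : ∀ x : ℝ, f x = x * (1 - (1 - x) ^ 2) / ((1 - x) ^ 2 + x)) :
    ∀ q ∈ Set.Ioc (0:ℝ) (1/2), ∀ q₁ ∈ Set.Ico (1/2 : ℝ) 1,
      q ≤ 1 - q₁ → f q ≤ f (1 - q₁) / (1 - q₁) * q := by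
  rintro q ⟨hq0, -⟩ q₁ ⟨hq₁, hq₁1⟩ hle
  have hf_eq (x : ℝ) : f x = x * chordSlope x := by rw [hf, mul_chordSlope]
  have ha : 0 < 1 - q₁ := by linarith
  rw [hf_eq, hf_eq, mul_div_cancel_left₀ _ ha.ne', mul_comm]
  have hsqrt := half_le_sqrt_three_sub_one
  gcongr
  exact chordSlope_monotoneOn ⟨hq0.le, by linarith⟩ ⟨ha.le, by linarith⟩ hle
end

section
/- In the full-control (monopoly) MNL model, the revenue-optimal solution over the set S of displayed products sets the same price p* = 1 + ω for all products, where ω = W(Σ_{j∈S} exp(θ_j - 1)), and the resulting optimal revenue equals ω. In particular, the optimal revenue is nondecreasing in S (with respect to set inclusion). -/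
/-!
At the optimum every product is priced `1 + ω`, where `ω e^ω = Σ_{j∈S} e^{θ_j - 1}`. Optimality
follows termwise from `p - ω ≤ e^{p - 1 - ω}` (that is, `1 + x ≤ e^x`): multiplied by the
attraction `e^{θ_i - p_i}` it gives `p_i e^{θ_i - p_i} ≤ ω e^{θ_i - p_i} + e^{θ_i - 1} e^{-ω}`, and
the last terms sum to `ω`. Monotonicity in `S` holds because `x ↦ x e^x` is increasing on `[0, ∞)`.
-/

open Real Finset

noncomputable def mnlRevenue {ι : Type*} (S : Finset ι) (θ p : ι → ℝ) : ℝ :=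
  ∑ i ∈ S, p i * exp (θ i - p i) / (1 + ∑ j ∈ S, exp (θ j - p j))

lemma le_of_mul_exp_le_mul_exp {x y : ℝ} (hy : 0 ≤ y) (h : x * exp x ≤ y * exp y) : x ≤ y := by
  by_contra! hyx
  have : y * exp y < x * exp x :=
    mul_lt_mul hyx (exp_lt_exp.2 hyx).le (exp_pos y) (hy.trans hyx.le)
  linarith

lemma monotoneOn_of_mul_exp_rightInverse {W : ℝ → ℝ}
    (hW : ∀ x : ℝ, 0 ≤ x → 0 ≤ W x ∧ W x * exp (W x) = x) : MonotoneOn W (Set.Ici 0) :=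
  fun x hx y hy hxy => le_of_mul_exp_le_mul_exp (hW y hy).1 <| by
    rw [(hW x hx).2, (hW y hy).2]; exact hxy

lemma mul_exp_sub_le (p θ ω : ℝ) :
    p * exp (θ - p) ≤ ω * exp (θ - p) + exp (θ - 1) * exp (-ω) := by
  have hexp : exp (p - 1 - ω) * exp (θ - p) = exp (θ - 1) * exp (-ω) := by
    rw [← exp_add, ← exp_add]; ring_nf
  have := mul_le_mul_of_nonneg_right (by linarith [add_one_le_exp (p - 1 - ω)] :
    p - ω ≤ exp (p - 1 - ω)) (exp_pos (θ - p)).le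
  linarith

section

variable {ι : Type*} {S : Finset ι} {θ : ι → ℝ} {ω : ℝ}

lemma mul_exp_neg_eq_of_mul_exp_eq {A : ℝ} (hω : ω * exp ω = A) : A * exp (-ω) = ω := by
  rw [← hω, mul_assoc, ← exp_add, add_neg_cancel, exp_zero, mul_one]

lemma sum_exp_sub_one_add (hω : ω * exp ω = ∑ j ∈ S, exp (θ j - 1)) :
    ∑ j ∈ S, exp (θ j - (1 + ω)) = ω := by
  calc ∑ j ∈ S, exp (θ j - (1 + ω)) = ∑ j ∈ S, exp (θ j - 1) * exp (-ω) :=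
        sum_congr rfl fun j _ => by rw [← exp_add]; ring_nf
    _ = ω := by rw [← sum_mul, mul_exp_neg_eq_of_mul_exp_eq hω]

lemma mnlRevenue_const (hω : ω * exp ω = ∑ j ∈ S, exp (θ j - 1)) :
    mnlRevenue S θ (fun _ => 1 + ω) = ω := by
  have hsum := sum_exp_sub_one_add hω
  have hω0 : 0 ≤ ω := hsum ▸ sum_nonneg fun _ _ => (exp_pos _).le
  rw [mnlRevenue, ← sum_div, ← mul_sum, hsum]
  field_simp

lemma mnlRevenue_le (hω : ω * exp ω = ∑ j ∈ S, exp (θ j - 1)) (p : ι → ℝ) :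
    mnlRevenue S θ p ≤ ω := by
  have hD : 0 < 1 + ∑ j ∈ S, exp (θ j - p j) := by
    linarith [sum_nonneg fun j (_ : j ∈ S) => (exp_pos (θ j - p j)).le]
  rw [mnlRevenue, ← sum_div, div_le_iff₀ hD]
  calc ∑ i ∈ S, p i * exp (θ i - p i)
      ≤ ∑ i ∈ S, (ω * exp (θ i - p i) + exp (θ i - 1) * exp (-ω)) :=
        sum_le_sum fun i _ => mul_exp_sub_le (p i) (θ i) ω
    _ = ω * ∑ i ∈ S, exp (θ i - p i) + (∑ i ∈ S, exp (θ i - 1)) * exp (-ω) := by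
        rw [sum_add_distrib, mul_sum, sum_mul]
    _ = ω * (1 + ∑ j ∈ S, exp (θ j - p j)) := by
        rw [mul_exp_neg_eq_of_mul_exp_eq hω]; ring

end

theorem monopoly_revenue_optimal
    {ι : Type*} (S : Finset ι) (θ : ι → ℝ)
    (W : ℝ → ℝ)
    (hW : ∀ x : ℝ, 0 ≤ x → 0 ≤ W x ∧ W x * Real.exp (W x) = x)
    (re : (ι → ℝ) → ℝ)
    (hre : ∀ p : ι → ℝ, re p =
      ∑ i ∈ S, p i * Real.exp (θ i - p i) /
        (1 + ∑ j ∈ S, Real.exp (θ j - p j))) :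
    re (fun _ => 1 + W (∑ j ∈ S, Real.exp (θ j - 1)))
        = W (∑ j ∈ S, Real.exp (θ j - 1)) ∧
    (∀ p : ι → ℝ, re p ≤ W (∑ j ∈ S, Real.exp (θ j - 1))) ∧
    (∀ S' : Finset ι, S ⊆ S' →
      W (∑ j ∈ S, Real.exp (θ j - 1)) ≤ W (∑ j ∈ S', Real.exp (θ j - 1))) := by
  obtain rfl : re = mnlRevenue S θ := funext hre
  have hsum_nonneg (T : Finset ι) : 0 ≤ ∑ j ∈ T, exp (θ j - 1) :=
    sum_nonneg fun _ _ => (exp_pos _).le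
  have hω := (hW _ (hsum_nonneg S)).2
  refine ⟨mnlRevenue_const hω, mnlRevenue_le hω, fun S' hSS' => ?_⟩
  exact monotoneOn_of_mul_exp_rightInverse hW (hsum_nonneg S) (hsum_nonneg S') <|
    sum_le_sum_of_subset_of_nonneg hSS' fun _ _ _ => (exp_pos _).le
end
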